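/- Let G be a connected reductive group over a field F, and let Y ∈ Lie(G)(F) be a regular semisimple element that is conjugate by an element g ∈ G(F^s) to an element X ∈ Lie(M)(F), where M is a Levi subgroup of an F-parabolic subgroup of G. Then Y is G(F)-conjugate to an element of Lie(M)(F). -/

import Mathlib

/-!
The statement is modelled on `F^s`-points with Galois descent data:
* `Gs = G(F^s)` with the Galois action of `Γ = Gal(F^s|F)`, and `G(F)` realized as the
  fixed points;
* `ad : Gs →* (Vs ≃+ Vs)` the adjoint action on `Vs = Lie(G)(F^s)`, `galV` the Galois
  action on `Vs`, compatible via `hcompat`;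
* `Ms = M(F^s)` and `ms = Lie(M)(F^s)`, an `Ad(Ms)`-stable subgroup of `Vs`; `Lie(M)(F)` is
  the set of Galois-fixed elements of `ms`;
* regularity of `Y` (hence of `X = Ad(g)Y`) enters through `hreg` : the centralizer of `X`
  in `G(F^s)` is contained in `M(F^s)`;
* the Borel–Tits theorem (F^s-conjugate F-parabolics are F-conjugate; F-Levi subgroups of a
  parabolic are conjugate by an F-point) enters through the descent hypothesis `hdescent`:
  an element `u ∈ G(F^s)` whose "cocycle" `σ ↦ u·σ(u)⁻¹` has values in `M(F^s)` can be
  modified by an element of `M(F^s)` into a Galois-fixed element.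

Since `X` and `Y` are Galois-fixed, `σ(g)` also conjugates `Y` to `X`, so `g·σ(g)⁻¹`
centralizes `X` and lies in `M(F^s)` by regularity.  Descent then yields `m ∈ M(F^s)` with
`m·g ∈ G(F)`, and `Ad(m·g) Y = Ad(m) X ∈ Lie(M)`.
-/

/-- The multiplicative group structure on `V ≃+ V` (composition, `e₁ * e₂ = e₂.trans e₁`)
that older Mathlib provided via `AddAut`; `AddAut` is now an additive group. -/
instance instGroupAddEquivSelfOld (V : Type*) [Add V] : Group (V ≃+ V) :=
  inferInstanceAs (Group (Multiplicative (AddAut V)))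

theorem addEquiv_mul_apply {V : Type*} [Add V] (e₁ e₂ : V ≃+ V) (v : V) :
    (e₁ * e₂) v = e₁ (e₂ v) :=
  rfl

theorem addEquiv_inv_apply {V : Type*} [Add V] (e : V ≃+ V) (v : V) : e⁻¹ v = e.symm v :=
  rfl

section Conjugation

variable {Γ Gs Vs : Type*} [Group Gs] [Add Vs] (ad : Gs →* (Vs ≃+ Vs))

theorem ad_mul_inv_apply_of_apply_eq {a b : Gs} {Y X : Vs} (ha : ad a Y = X) (hb : ad b Y = X) :
    ad (a * b⁻¹) X = X := by
  rw [map_mul, map_inv, addEquiv_mul_apply, addEquiv_inv_apply, ← hb, AddEquiv.symm_apply_apply,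
    hb, ha]

theorem ad_smul_apply_of_fixed [SMul Γ Gs] (galV : Γ → (Vs ≃+ Vs))
    (hcompat : ∀ (σ : Γ) (g : Gs) (v : Vs), galV σ (ad g v) = ad (σ • g) (galV σ v))
    {σ : Γ} {g : Gs} {Y X : Vs} (hY : galV σ Y = Y) (hX : galV σ X = X) (hg : ad g Y = X) :
    ad (σ • g) Y = X := by
  rw [← hY, ← hcompat, hg, hX]

end Conjugation

theorem stmt14_general {Γ Gs Vs : Type*} [Group Γ] [Group Gs] [AddCommGroup Vs]
    [MulDistribMulAction Γ Gs]
    (ad : Gs →* (Vs ≃+ Vs)) (galV : Γ →* (Vs ≃+ Vs))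
    (hcompat : ∀ (σ : Γ) (g : Gs) (v : Vs), galV σ (ad g v) = ad (σ • g) (galV σ v))
    (Ms : Subgroup Gs)
    (ms : AddSubgroup Vs)
    (hms : ∀ g ∈ Ms, ∀ v ∈ ms, ad g v ∈ ms)
    (Y : Vs) (hY : ∀ σ : Γ, galV σ Y = Y)
    (X : Vs) (hXm : X ∈ ms) (hXfix : ∀ σ : Γ, galV σ X = X)
    (g : Gs) (hg : ad g Y = X)
    (hreg : ∀ h : Gs, ad h X = X → h ∈ Ms)
    (hdescent : ∀ u : Gs, (∀ σ : Γ, u * (σ • u)⁻¹ ∈ Ms) →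
      ∃ m ∈ Ms, ∀ σ : Γ, σ • (m * u) = m * u) :
    ∃ h : Gs, (∀ σ : Γ, σ • h = h) ∧ ad h Y ∈ ms := by
  have hcocycle (σ : Γ) : g * (σ • g)⁻¹ ∈ Ms :=
    hreg _ <| ad_mul_inv_apply_of_apply_eq ad hg <|
      ad_smul_apply_of_fixed ad galV hcompat (hY σ) (hXfix σ) hg
  obtain ⟨m, hm, hmg_fixed⟩ := hdescent g hcocycle
  refine ⟨m * g, hmg_fixed, ?_⟩
  rw [map_mul, addEquiv_mul_apply, hg]
  exact hms m hm X hXm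

theorem stmt14 {Γ Gs Vs : Type*} [Group Γ] [Group Gs] [AddCommGroup Vs]
    [MulDistribMulAction Γ Gs]
    (ad : Gs →* (Vs ≃+ Vs)) (galV : Γ →* (Vs ≃+ Vs))
    (hcompat : ∀ (σ : Γ) (g : Gs) (v : Vs), galV σ (ad g v) = ad (σ • g) (galV σ v))
    (Ms : Subgroup Gs) (hMstab : ∀ σ : Γ, ∀ g ∈ Ms, σ • g ∈ Ms)
    (ms : AddSubgroup Vs)
    (hmsstab : ∀ σ : Γ, ∀ v ∈ ms, galV σ v ∈ ms)
    (hms : ∀ g ∈ Ms, ∀ v ∈ ms, ad g v ∈ ms)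
    (Y : Vs) (hY : ∀ σ : Γ, galV σ Y = Y)
    (X : Vs) (hXm : X ∈ ms) (hXfix : ∀ σ : Γ, galV σ X = X)
    (g : Gs) (hg : ad g Y = X)
    (hreg : ∀ h : Gs, ad h X = X → h ∈ Ms)
    (hdescent : ∀ u : Gs, (∀ σ : Γ, u * (σ • u)⁻¹ ∈ Ms) →
      ∃ m ∈ Ms, ∀ σ : Γ, σ • (m * u) = m * u) :
    ∃ h : Gs, (∀ σ : Γ, σ • h = h) ∧ ad h Y ∈ ms :=
  stmt14_general ad galV hcompat Ms ms hms Y hY X hXm hXfix g hg hreg hdescent
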